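/- arXiv:1808.01235 — 2 statements merged into one kernel-verified Lean document; each statement's English description precedes it below -/
import Mathlib

section
/- On the ring of symmetric functions, the skewing operator h_n^⊥ and multiplication by h_m satisfy the commutation relation h_n^⊥ ∘ (h_m ·) = ∑_{k=0}^{min(n,m)} (h_{m−k} ·) ∘ h_{n−k}^⊥ as linear endomorphisms, where f^⊥ is the Hall-inner-product adjoint of multiplication by f. -/
/-!
Multiplication by `p_i` has Hall adjoint `D_i = i ∂/∂p_i`, a derivation. Transposing Newton's
identity `(k + 1) h_{k+1} = ∑_{i+j=k} p_{i+1} h_j` gives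
`(k + 1) h_{k+1}^⊥ = ∑_{i+j=k} h_j^⊥ D_{i+1}`. Since `D_i h_m = h_{m-i}`, induction on `k`
yields `h_k^⊥ h_m = h_{m-k}`, and together with the Leibniz rule for the `D_i` it yields
`h_n^⊥ (u v) = ∑_{a+b=n} h_a^⊥ u · h_b^⊥ v`. Take `u = h_m`.
-/

open MvPolynomial

abbrev SymF : Type := MvPolynomial ℕ+ ℚ

noncomputable def pOf (i : ℕ) : SymF := if h : 0 < i then X (⟨i, h⟩ : ℕ+) else 1

def zPart (m : Multiset ℕ) : ℕ :=
  m.prod * m.toFinset.prod fun i => (m.count i).factorial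

noncomputable def hh (n : ℕ) : SymF :=
  ∑ P : n.Partition, ((zPart P.parts : ℚ)⁻¹) • (P.parts.map pOf).prod

def zMon (d : ℕ+ →₀ ℕ) : ℕ := d.prod fun i k => (i : ℕ) ^ k * k.factorial

noncomputable def hallInner (f g : SymF) : ℚ :=
  ∑ d ∈ f.support, (zMon d : ℚ) * coeff d f * coeff d g

open Finset Finsupp

noncomputable def partsOf (d : ℕ+ →₀ ℕ) : Multiset ℕ := (toMultiset d).map (↑)

lemma partsOf_injective : Function.Injective partsOf := by
  classical
  exact (Multiset.map_injective PNat.coe_injective).comp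
    (Function.LeftInverse.injective (g := Multiset.toFinsupp) toMultiset_toFinsupp)

lemma exists_partsOf_eq (m : Multiset ℕ) (hm : ∀ i ∈ m, 0 < i) : ∃ d, partsOf d = m := by
  lift m to Multiset ℕ+ using hm
  classical
  exact ⟨Multiset.toFinsupp m, by rw [partsOf, Multiset.toFinsupp_toMultiset]⟩

lemma pos_of_mem_partsOf {d : ℕ+ →₀ ℕ} {i : ℕ} (hi : i ∈ partsOf d) : 0 < i := by
  obtain ⟨j, -, rfl⟩ := Multiset.mem_map.1 hi
  exact j.pos

lemma sum_partsOf (d : ℕ+ →₀ ℕ) : (partsOf d).sum = weight PNat.val d := by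
  induction d using Finsupp.induction with
  | zero => simp [partsOf]
  | single_add i k d _ _ ih =>
    rw [partsOf] at ih ⊢
    rw [toMultiset_add, Multiset.map_add, Multiset.sum_add, ih, map_add, toMultiset_single,
      weight_single, Multiset.map_nsmul, Multiset.sum_nsmul]
    simp

lemma zPart_partsOf (d : ℕ+ →₀ ℕ) : zPart (partsOf d) = zMon d := by
  classical
  have hprod : (partsOf d).prod = d.prod fun i k => (i : ℕ) ^ k := by
    rw [partsOf, ← PNat.coe_coeMonoidHom, ← map_multiset_prod, prod_toMultiset, map_finsuppProd]
    simp
  rw [zPart, zMon, prod_mul, hprod, partsOf, Multiset.toFinset_map, toFinset_toMultiset,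
    Finset.prod_image fun i _ j _ h => PNat.coe_injective h]
  congr 1
  refine Finset.prod_congr rfl fun i _ => ?_
  rw [Multiset.count_map_eq_count' _ _ PNat.coe_injective, count_toMultiset]

lemma prod_map_pOf_partsOf (d : ℕ+ →₀ ℕ) :
    ((partsOf d).map pOf).prod = monomial d (1 : ℚ) := by
  have hp : pOf ∘ ((↑) : ℕ+ → ℕ) = X := funext fun i => dif_pos i.pos
  rw [partsOf, Multiset.map_map, hp, ← prod_X_pow_eq_monomial, toMultiset_map, prod_toMultiset]
  exact prod_mapDomain_index (fun _ => pow_zero _) fun _ _ _ => pow_add _ _ _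

lemma coeff_hh (n : ℕ) (d : ℕ+ →₀ ℕ) :
    coeff d (hh n) = if weight PNat.val d = n then (zMon d : ℚ)⁻¹ else 0 := by
  have hterm : ∀ P : n.Partition,
      coeff d ((zPart P.parts : ℚ)⁻¹ • (P.parts.map pOf).prod)
        = if P.parts = partsOf d then (zMon d : ℚ)⁻¹ else 0 := by
    intro P
    obtain ⟨e, he⟩ := exists_partsOf_eq P.parts fun i hi => P.parts_pos hi
    simp only [← he, zPart_partsOf, prod_map_pOf_partsOf, coeff_smul, coeff_monomial,
      partsOf_injective.eq_iff]
    split_ifs with h <;> simp [h]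
  rw [hh, coeff_sum, Finset.sum_congr rfl fun P _ => hterm P]
  split_ifs with hd
  · let Q : n.Partition := ⟨partsOf d, pos_of_mem_partsOf, by rw [sum_partsOf, hd]⟩
    simp_rw [show ∀ P : n.Partition, P.parts = partsOf d ↔ P = Q from
      fun P => (Nat.Partition.ext_iff (x := P) (y := Q)).symm]
    simp
  · refine Finset.sum_eq_zero fun P _ => if_neg fun h => hd ?_
    rw [← sum_partsOf, ← h, P.parts_sum]

lemma hh_zero : hh 0 = 1 := by
  simp [hh, zPart]

lemma zMon_pos (d : ℕ+ →₀ ℕ) : 0 < zMon d :=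
  Finset.prod_pos fun i _ => Nat.mul_pos (Nat.pow_pos i.pos) (Nat.factorial_pos _)

lemma zMon_add_single (d : ℕ+ →₀ ℕ) (i : ℕ+) :
    zMon (d + single i 1) = i * (d i + 1) * zMon d := by
  set g : ℕ+ → ℕ → ℕ := fun j k => j ^ k * k.factorial
  have hz : ∀ j, g j 0 = 1 := fun _ => rfl
  rw [zMon, zMon, ← mul_prod_erase' _ i g hz, ← mul_prod_erase' d i g hz, erase_add,
    erase_single, add_zero, Finsupp.add_apply, single_eq_same]
  simp only [g, pow_succ, Nat.factorial_succ]
  ring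

lemma hallInner_eq_sum_of_support_subset {f : SymF} (g : SymF) {s : Finset (ℕ+ →₀ ℕ)}
    (hs : f.support ⊆ s) : hallInner f g = ∑ d ∈ s, (zMon d : ℚ) * coeff d f * coeff d g :=
  Finset.sum_subset hs fun d _ hd => by
    rw [MvPolynomial.notMem_support_iff.1 hd, mul_zero, zero_mul]

lemma hallInner_comm (f g : SymF) : hallInner f g = hallInner g f := by
  rw [hallInner_eq_sum_of_support_subset g Finset.subset_union_left,
    hallInner_eq_sum_of_support_subset f (Finset.subset_union_right (s₁ := f.support))]
  exact Finset.sum_congr rfl fun d _ => by ring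

lemma hallInner_add_right (f g h : SymF) :
    hallInner f (g + h) = hallInner f g + hallInner f h := by
  simp only [hallInner, coeff_add, mul_add, Finset.sum_add_distrib]

lemma hallInner_smul_right (c : ℚ) (f g : SymF) :
    hallInner f (c • g) = c • hallInner f g := by
  simp only [hallInner, coeff_smul, smul_eq_mul, Finset.mul_sum]
  exact Finset.sum_congr rfl fun d _ => by ring

noncomputable def hallForm : LinearMap.BilinForm ℚ SymF :=
  LinearMap.mk₂ ℚ hallInner
    (fun f g h => by rw [hallInner_comm, hallInner_add_right, hallInner_comm h, hallInner_comm h])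
    (fun c f g => by rw [hallInner_comm, hallInner_smul_right, hallInner_comm g])
    hallInner_add_right hallInner_smul_right

lemma hallForm_apply (f g : SymF) : hallForm f g = hallInner f g := rfl

lemma hallInner_monomial_right (f : SymF) (d : ℕ+ →₀ ℕ) (c : ℚ) :
    hallInner f (monomial d c) = zMon d * coeff d f * c := by
  classical
  rw [hallInner_eq_sum_of_support_subset _ (Finset.subset_insert d f.support),
    Finset.sum_eq_single_of_mem d (Finset.mem_insert_self d _), coeff_monomial, if_pos rfl]
  intro e _ he
  rw [coeff_monomial, if_neg (Ne.symm he), mul_zero]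

lemma eq_of_hallInner_monomial_eq {f g : SymF}
    (h : ∀ d, hallInner f (monomial d 1) = hallInner g (monomial d 1)) : f = g := by
  ext d
  have := h d
  simp only [hallInner_monomial_right, mul_one] at this
  exact mul_left_cancel₀ (Nat.cast_ne_zero.2 (zMon_pos d).ne') this

lemma hallInner_hh_monomial (n : ℕ) (d : ℕ+ →₀ ℕ) (c : ℚ) :
    hallInner (hh n) (monomial d c) = if weight PNat.val d = n then c else 0 := by
  have hz : (zMon d : ℚ) ≠ 0 := Nat.cast_ne_zero.2 (zMon_pos d).ne'
  rw [hallInner_monomial_right, coeff_hh]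
  split_ifs <;> simp [hz]

noncomputable def scaledPderiv (i : ℕ+) : Module.End ℚ SymF :=
  ((i : ℕ) : ℚ) • (pderiv i).toLinearMap

lemma scaledPderiv_apply (i : ℕ+) (f : SymF) :
    scaledPderiv i f = ((i : ℕ) : ℚ) • pderiv i f := rfl

lemma scaledPderiv_mul (i : ℕ+) (f g : SymF) :
    scaledPderiv i (f * g) = scaledPderiv i f * g + f * scaledPderiv i g := by
  simp only [scaledPderiv_apply, pderiv_mul, smul_add, smul_mul_assoc, mul_smul_comm]

lemma scaledPderiv_monomial_one (i : ℕ+) (d : ℕ+ →₀ ℕ) :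
    scaledPderiv i (monomial d 1) = monomial (d - single i 1) ((i : ℕ) * (d i : ℚ)) := by
  rw [scaledPderiv_apply, pderiv_monomial, smul_monomial, smul_eq_mul, one_mul]

def IsHallAdjoint (T : Module.End ℚ SymF) (g : SymF) : Prop :=
  ∀ u v, hallInner (T u) v = hallInner u (g * v)

namespace IsHallAdjoint

lemma unique {S T : Module.End ℚ SymF} {g : SymF} (hS : IsHallAdjoint S g)
    (hT : IsHallAdjoint T g) : S = T :=
  LinearMap.ext fun u => eq_of_hallInner_monomial_eq fun d => by rw [hS, hT]

lemma one : IsHallAdjoint 1 1 := fun u v => by rw [one_mul]; rfl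

lemma mul {S T : Module.End ℚ SymF} {g h : SymF} (hS : IsHallAdjoint S g)
    (hT : IsHallAdjoint T h) : IsHallAdjoint (T * S) (g * h) := fun u v => by
  rw [Module.End.mul_apply, hT, hS, mul_assoc]

lemma smul {T : Module.End ℚ SymF} {g : SymF} (c : ℚ) (hT : IsHallAdjoint T g) :
    IsHallAdjoint (c • T) (c • g) := fun u v => by
  simp only [← hallForm_apply, LinearMap.smul_apply, map_smul, smul_mul_assoc]
  rw [hallForm_apply, hallForm_apply, hT]

lemma sum {ι : Type*} (s : Finset ι) {T : ι → Module.End ℚ SymF} {g : ι → SymF}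
    (hT : ∀ i ∈ s, IsHallAdjoint (T i) (g i)) :
    IsHallAdjoint (∑ i ∈ s, T i) (∑ i ∈ s, g i) := fun u v => by
  simp only [← hallForm_apply, LinearMap.sum_apply, map_sum, Finset.sum_mul]
  exact Finset.sum_congr rfl fun i hi => hT i hi u v

end IsHallAdjoint

lemma isHallAdjoint_scaledPderiv (i : ℕ+) : IsHallAdjoint (scaledPderiv i) (X i) := by
  intro u v
  have : hallForm (scaledPderiv i u) = hallForm u ∘ₗ LinearMap.mulLeft ℚ (X i) := by
    refine MvPolynomial.linearMap_ext fun d => LinearMap.ext fun c => ?_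
    simp only [LinearMap.comp_apply, LinearMap.mulLeft_apply, hallForm_apply]
    rw [hallInner_monomial_right, mul_comm (X i), ← pow_one (X i), ← monomial_add_single,
      hallInner_monomial_right, scaledPderiv_apply, coeff_smul, coeff_pderiv, zMon_add_single]
    push_cast
    ring
  exact LinearMap.congr_fun this v

lemma weight_eq_sum_range {d : ℕ+ →₀ ℕ} {N : ℕ} (hN : weight PNat.val d ≤ N) :
    weight PNat.val d = ∑ a ∈ range N, (a + 1) * d a.succPNat := by
  rw [weight_apply, Finsupp.sum_of_support_subset d (s := (range N).map
    ⟨Nat.succPNat, Nat.succPNat_injective⟩) ?_ _ fun i _ => zero_smul ℕ (i : ℕ), sum_map]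
  · simp [mul_comm]
  · intro i hi
    have := le_weight_of_ne_zero' PNat.val (Finsupp.mem_support_iff.1 hi)
    simp only [mem_map, mem_range, Function.Embedding.coeFn_mk]
    have := i.pos
    exact ⟨i.natPred, by rw [PNat.natPred]; omega, PNat.succPNat_natPred i⟩

lemma hh_newton (k : ℕ) :
    ((k + 1 : ℕ) : ℚ) • hh (k + 1) = ∑ p ∈ antidiagonal k, X p.1.succPNat * hh p.2 := by
  refine eq_of_hallInner_monomial_eq fun d => ?_
  have hterm : ∀ p ∈ antidiagonal k, hallInner (X p.1.succPNat * hh p.2) (monomial d 1) =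
      if weight PNat.val d = k + 1 then ((p.1 + 1 : ℕ) : ℚ) * d p.1.succPNat else 0 := by
    rintro ⟨a, b⟩ hab
    rw [HasAntidiagonal.mem_antidiagonal] at hab
    -- `⟨p_i h_b, p^d⟩ = ⟨h_b, D_i p^d⟩ = i d_i [|d| = i + b]`
    rw [hallInner_comm, ← isHallAdjoint_scaledPderiv, hallInner_comm, scaledPderiv_monomial_one,
      hallInner_hh_monomial]
    by_cases hd : d a.succPNat = 0
    · simp [hd]
    · have := weight_sub_single_add (w := PNat.val) hd
      simp only [Nat.succPNat_coe] at this ⊢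
      split_ifs <;> first | rfl | omega
  simp only [← hallForm_apply, map_smul, map_sum, LinearMap.smul_apply, LinearMap.sum_apply]
  simp only [hallForm_apply, hallInner_hh_monomial]
  rw [sum_congr rfl hterm]
  split_ifs with h
  · rw [Nat.sum_antidiagonal_eq_sum_range_succ_mk]
    have hsum := weight_eq_sum_range h.le
    rw [h] at hsum
    rw [smul_eq_mul, mul_one]
    exact_mod_cast hsum
  · simp

lemma scaledPderiv_hh (i : ℕ+) (m : ℕ) :
    scaledPderiv i (hh m) = if (i : ℕ) ≤ m then hh (m - i) else 0 := by
  refine eq_of_hallInner_monomial_eq fun d => ?_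
  rw [isHallAdjoint_scaledPderiv, mul_comm, ← pow_one (X i), ← monomial_add_single,
    hallInner_hh_monomial, map_add, weight_single, smul_eq_mul, one_mul]
  by_cases h : (i : ℕ) ≤ m
  · rw [if_pos h, hallInner_hh_monomial]
    exact if_congr (by omega) rfl rfl
  · rw [if_neg h, ← hallForm_apply, map_zero, LinearMap.zero_apply, if_neg (by omega)]

lemma sum_antidiagonal_antidiagonal_fst {A M : Type*} [AddCommMonoid A] [HasAntidiagonal A]
    [AddCommMonoid M] (n : A) (f : A → A → A → M) :
    ∑ p ∈ antidiagonal n, ∑ q ∈ antidiagonal p.1, f q.1 q.2 p.2 =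
      ∑ p ∈ antidiagonal n, ∑ q ∈ antidiagonal p.2, f p.1 q.1 q.2 := by
  simp only [sum_sigma']
  apply sum_nbij' (fun x => ⟨(x.2.1, x.2.2 + x.1.2), (x.2.2, x.1.2)⟩)
    (fun x => ⟨(x.1.1 + x.2.1, x.2.2), (x.1.1, x.2.1)⟩) <;>
    aesop (add simp [add_assoc])

lemma sum_antidiagonal_antidiagonal_snd_comm {A M : Type*} [AddCommMonoid A] [HasAntidiagonal A]
    [AddCommMonoid M] (n : A) (f : A → A → A → M) :
    ∑ p ∈ antidiagonal n, ∑ q ∈ antidiagonal p.2, f p.1 q.1 q.2 =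
      ∑ p ∈ antidiagonal n, ∑ q ∈ antidiagonal p.2, f q.1 p.1 q.2 := by
  simp only [sum_sigma']
  apply sum_nbij' (fun x => ⟨(x.2.1, x.1.1 + x.2.2), (x.1.1, x.2.2)⟩)
    (fun x => ⟨(x.2.1, x.1.1 + x.2.2), (x.1.1, x.2.2)⟩) <;>
    aesop (add simp [add_left_comm])

section hhPerp

variable {Hp : ℕ → Module.End ℚ SymF}

lemma hhPerp_zero (hHp : ∀ k, IsHallAdjoint (Hp k) (hh k)) : Hp 0 = 1 :=
  (hHp 0).unique (hh_zero ▸ IsHallAdjoint.one)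

lemma hhPerp_newton (hHp : ∀ k, IsHallAdjoint (Hp k) (hh k)) (k : ℕ) (u : SymF) :
    ((k + 1 : ℕ) : ℚ) • Hp (k + 1) u =
      ∑ p ∈ antidiagonal k, Hp p.2 (scaledPderiv p.1.succPNat u) := by
  have hL := (hHp (k + 1)).smul ((k + 1 : ℕ) : ℚ)
  have hR : IsHallAdjoint (∑ p ∈ antidiagonal k, Hp p.2 * scaledPderiv p.1.succPNat)
      (∑ p ∈ antidiagonal k, X p.1.succPNat * hh p.2) :=
    IsHallAdjoint.sum _ fun p _ => (isHallAdjoint_scaledPderiv _).mul (hHp _)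
  rw [← hh_newton] at hR
  simpa using LinearMap.congr_fun (hL.unique hR) u

lemma hhPerp_hh (hHp : ∀ k, IsHallAdjoint (Hp k) (hh k)) (k m : ℕ) :
    Hp k (hh m) = if k ≤ m then hh (m - k) else 0 := by
  induction k using Nat.strong_induction_on generalizing m with
  | _ k ih =>
  rcases k with _ | k
  · simp [hhPerp_zero hHp]
  refine smul_right_injective SymF
    (Nat.cast_ne_zero.2 k.succ_ne_zero : ((k + 1 : ℕ) : ℚ) ≠ 0) ?_
  dsimp only
  rw [hhPerp_newton hHp]
  have hterm : ∀ p ∈ antidiagonal k, Hp p.2 (scaledPderiv p.1.succPNat (hh m)) =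
      if k + 1 ≤ m then hh (m - (k + 1)) else 0 := by
    rintro ⟨a, b⟩ hab
    rw [HasAntidiagonal.mem_antidiagonal] at hab
    rw [scaledPderiv_hh, Nat.succPNat_coe]
    split_ifs with h1 h2 h2
    · rw [ih b (by omega), if_pos (by omega)]
      congr 1
      omega
    · rw [ih b (by omega), if_neg (by omega)]
    · omega
    · rw [map_zero]
  rw [sum_congr rfl hterm, sum_const, Nat.card_antidiagonal, Nat.cast_smul_eq_nsmul]

lemma hhPerp_mul (hHp : ∀ k, IsHallAdjoint (Hp k) (hh k)) (n : ℕ) (u v : SymF) :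
    Hp n (u * v) = ∑ p ∈ antidiagonal n, Hp p.1 u * Hp p.2 v := by
  induction n using Nat.strong_induction_on generalizing u v with
  | _ n ih =>
  rcases n with _ | N
  · simp [hhPerp_zero hHp]
  refine smul_right_injective SymF
    (Nat.cast_ne_zero.2 N.succ_ne_zero : ((N + 1 : ℕ) : ℚ) ≠ 0) ?_
  dsimp only
  have hsplit : ((N + 1 : ℕ) : ℚ) • ∑ p ∈ antidiagonal (N + 1), Hp p.1 u * Hp p.2 v =
      ∑ p ∈ antidiagonal (N + 1), ((p.1 : ℚ) • Hp p.1 u) * Hp p.2 v +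
        ∑ p ∈ antidiagonal (N + 1), Hp p.1 u * ((p.2 : ℚ) • Hp p.2 v) := by
    rw [Finset.smul_sum, ← sum_add_distrib]
    refine sum_congr rfl fun p hp => ?_
    rw [HasAntidiagonal.mem_antidiagonal] at hp
    rw [smul_mul_assoc, mul_smul_comm, ← add_smul, ← Nat.cast_add, hp]
  have hleft : ∑ p ∈ antidiagonal (N + 1), ((p.1 : ℚ) • Hp p.1 u) * Hp p.2 v =
      ∑ p ∈ antidiagonal N, ∑ q ∈ antidiagonal p.2,
        Hp q.1 (scaledPderiv p.1.succPNat u) * Hp q.2 v := calc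
    _ = ∑ p ∈ antidiagonal N, ∑ q ∈ antidiagonal p.1,
          Hp q.2 (scaledPderiv q.1.succPNat u) * Hp p.2 v := by
      rw [Nat.sum_antidiagonal_succ]
      simp only [Nat.cast_zero, zero_smul, zero_mul, zero_add, hhPerp_newton hHp, Finset.sum_mul]
    _ = _ := sum_antidiagonal_antidiagonal_fst N fun i c b =>
      Hp c (scaledPderiv i.succPNat u) * Hp b v
  have hright : ∑ p ∈ antidiagonal (N + 1), Hp p.1 u * ((p.2 : ℚ) • Hp p.2 v) =
      ∑ p ∈ antidiagonal N, ∑ q ∈ antidiagonal p.2,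
        Hp q.1 u * Hp q.2 (scaledPderiv p.1.succPNat v) := calc
    _ = ∑ p ∈ antidiagonal N, ∑ q ∈ antidiagonal p.2,
          Hp p.1 u * Hp q.2 (scaledPderiv q.1.succPNat v) := by
      rw [Nat.sum_antidiagonal_succ']
      simp only [Nat.cast_zero, zero_smul, mul_zero, zero_add, hhPerp_newton hHp, Finset.mul_sum]
    _ = _ := sum_antidiagonal_antidiagonal_snd_comm N fun a i c =>
      Hp a u * Hp c (scaledPderiv i.succPNat v)
  rw [hsplit, hleft, hright, ← sum_add_distrib, hhPerp_newton hHp]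
  refine sum_congr rfl fun p hp => ?_
  have hlt := Nat.antidiagonal.snd_lt hp
  rw [scaledPderiv_mul, map_add, ih _ hlt, ih _ hlt]

end hhPerp

/-- If `Hp n` (`= h_n^⊥`) is the Hall-adjoint of multiplication by `h_n`, then
`h_n^⊥ ∘ (h_m ·) = ∑_{k=0}^{min(n,m)} (h_{m-k} ·) ∘ h_{n-k}^⊥`. -/
theorem statement8 (Hp : ℕ → SymF →ₗ[ℚ] SymF)
    (hHp : ∀ (k : ℕ) (u v : SymF), hallInner (Hp k u) v = hallInner u (hh k * v))
    (n m : ℕ) (f : SymF) :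
    Hp n (hh m * f) = ∑ k ∈ Finset.range (min n m + 1), hh (m - k) * Hp (n - k) f := by
  rw [hhPerp_mul hHp, Nat.sum_antidiagonal_eq_sum_range_succ fun a b => Hp a (hh m) * Hp b f]
  simp only [hhPerp_hh hHp, ite_mul, zero_mul]
  rw [← sum_filter]
  congr 1
  ext k
  simp only [mem_filter, mem_range]
  omega
end

section
/- Gaussian elimination: Let A be an additive category and consider a three-term segment of a chain complex U → X ⊕ Y → Z ⊕ W → V, where the middle differential is the matrix ((C, D), (A, B)) with D : Y → Z an isomorphism. Then this complex is chain homotopy equivalent to the complex U → X → W → V with middle differential A − B D^{−1} C (and induced outer maps), via an explicit homotopy equivalence. -/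
/-!
Because `D` is invertible, `Y ⟶ Z` is a contractible summand of the complex and discarding it is
a deformation retraction: the projections `fst` and `(-D⁻¹ ≫ B, 𝟙)` undo the inclusions
`(𝟙, -C ≫ D⁻¹)` and `inr` exactly, while the other composite differs from the identity of the big
complex by the null-homotopy `D⁻¹ : Z ⟶ Y`. These maps commute with the original outer
differentials because `d² = 0` forces `uY = -(uX ≫ C ≫ D⁻¹)` and `vZ = -(D⁻¹ ≫ B ≫ vW)`.
-/

open CategoryTheory CategoryTheory.Limits

namespace GaussianElimination

variable {𝒜 : Type*} [Category 𝒜] [Preadditive 𝒜] [HasBinaryBiproducts 𝒜]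
  {U X Y Z W V : 𝒜} (A : X ⟶ W) (B : Y ⟶ W) (C : X ⟶ Z) (D : Y ⟶ Z) [IsIso D]

theorem eq_neg_comp_inv_of_lift_comp_eq_zero {uX : U ⟶ X} {uY : U ⟶ Y}
    (h : biprod.lift uX uY ≫ biprod.desc (biprod.lift C A) (biprod.lift D B) = 0) :
    uY = -(uX ≫ C ≫ inv D) := by
  have hZ : uX ≫ C + uY ≫ D = 0 := by simpa using congrArg (· ≫ biprod.fst) h
  rw [← cancel_mono D, Preadditive.neg_comp, Category.assoc, Category.assoc, IsIso.inv_hom_id,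
    Category.comp_id, eq_neg_iff_add_eq_zero, add_comm, hZ]

theorem eq_neg_inv_comp_of_comp_desc_eq_zero {vZ : Z ⟶ V} {vW : W ⟶ V}
    (h : biprod.desc (biprod.lift C A) (biprod.lift D B) ≫ biprod.desc vZ vW = 0) :
    vZ = -(inv D ≫ B ≫ vW) := by
  have hY : D ≫ vZ + B ≫ vW = 0 := by simpa using congrArg (biprod.inr ≫ ·) h
  rw [← cancel_epi D, Preadditive.comp_neg, IsIso.hom_inv_id_assoc, eq_neg_iff_add_eq_zero, hY]

theorem desc_lift_comp_desc_neg_inv_comp :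
    biprod.desc (biprod.lift C A) (biprod.lift D B) ≫ biprod.desc (-(inv D ≫ B)) (𝟙 W)
      = biprod.fst ≫ (A - C ≫ inv D ≫ B) := by
  ext <;> simp; abel

theorem sub_comp_inr_eq_lift_neg_comp_inv_comp :
    (A - C ≫ inv D ≫ B) ≫ biprod.inr
      = biprod.lift (𝟙 X) (-(C ≫ inv D)) ≫ biprod.desc (biprod.lift C A) (biprod.lift D B) := by
  ext <;> simp; abel

theorem id_sub_fst_comp_lift_neg_comp_inv_eq :
    𝟙 (X ⊞ Y) - biprod.fst ≫ biprod.lift (𝟙 X) (-(C ≫ inv D))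
      = biprod.desc (biprod.lift C A) (biprod.lift D B) ≫ biprod.fst ≫ inv D ≫ biprod.inr := by
  ext <;> simp

theorem id_sub_desc_neg_inv_comp_comp_inr_eq :
    𝟙 (Z ⊞ W) - biprod.desc (-(inv D ≫ B)) (𝟙 W) ≫ biprod.inr
      = (biprod.fst ≫ inv D ≫ biprod.inr) ≫ biprod.desc (biprod.lift C A) (biprod.lift D B) := by
  ext <;> simp

end GaussianElimination

open GaussianElimination in
/-- **Gaussian elimination.**  Consider a four-term segment of a chain complex
`U ⟶ X ⊞ Y ⟶ Z ⊞ W ⟶ V` in an additive category, where the middle differential has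
matrix `((C, D), (A, B))` (components `C : X ⟶ Z`, `D : Y ⟶ Z`, `A : X ⟶ W`,
`B : Y ⟶ W`) and `D` is an isomorphism.  Then this complex is chain homotopy
equivalent to the complex `U ⟶ X ⟶ W ⟶ V` with middle differential `A − B D⁻¹ C`
and the induced outer maps, via an explicit homotopy equivalence (which is the
identity on `U` and `V`). -/
theorem statement14 {𝒜 : Type*} [Category 𝒜] [Preadditive 𝒜] [HasBinaryBiproducts 𝒜]
    {U X Y Z W V : 𝒜}
    (uX : U ⟶ X) (uY : U ⟶ Y)
    (A : X ⟶ W) (B : Y ⟶ W) (C : X ⟶ Z) (D : Y ⟶ Z) [IsIso D]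
    (vZ : Z ⟶ V) (vW : W ⟶ V)
    (hd21 : biprod.lift uX uY ≫ biprod.desc (biprod.lift C A) (biprod.lift D B) = 0)
    (hd32 : biprod.desc (biprod.lift C A) (biprod.lift D B) ≫ biprod.desc vZ vW = 0) :
    ∃ (F1 : X ⊞ Y ⟶ X) (F2 : Z ⊞ W ⟶ W) (G1 : X ⟶ X ⊞ Y) (G2 : W ⟶ Z ⊞ W)
      (h1 : X ⊞ Y ⟶ U) (h2 : Z ⊞ W ⟶ X ⊞ Y) (h3 : V ⟶ Z ⊞ W)
      (k1 : X ⟶ U) (k2 : W ⟶ X) (k3 : V ⟶ W),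
      -- `F` is a chain map from the big complex to the reduced one (identity on `U`, `V`)
      biprod.lift uX uY ≫ F1 = uX ∧
      biprod.desc (biprod.lift C A) (biprod.lift D B) ≫ F2 = F1 ≫ (A - C ≫ inv D ≫ B) ∧
      biprod.desc vZ vW = F2 ≫ vW ∧
      -- `G` is a chain map from the reduced complex to the big one (identity on `U`, `V`)
      uX ≫ G1 = biprod.lift uX uY ∧
      (A - C ≫ inv D ≫ B) ≫ G2 = G1 ≫ biprod.desc (biprod.lift C A) (biprod.lift D B) ∧
      vW = G2 ≫ biprod.desc vZ vW ∧
      -- `h` is a homotopy from `F ≫ G` to the identity of the big complex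
      biprod.lift uX uY ≫ h1 = 0 ∧
      𝟙 (X ⊞ Y) - F1 ≫ G1
        = h1 ≫ biprod.lift uX uY
            + biprod.desc (biprod.lift C A) (biprod.lift D B) ≫ h2 ∧
      𝟙 (Z ⊞ W) - F2 ≫ G2
        = h2 ≫ biprod.desc (biprod.lift C A) (biprod.lift D B)
            + biprod.desc vZ vW ≫ h3 ∧
      h3 ≫ biprod.desc vZ vW = 0 ∧
      -- `k` is a homotopy from `G ≫ F` to the identity of the reduced complex
      uX ≫ k1 = 0 ∧
      𝟙 X - G1 ≫ F1 = k1 ≫ uX + (A - C ≫ inv D ≫ B) ≫ k2 ∧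
      𝟙 W - G2 ≫ F2 = k2 ≫ (A - C ≫ inv D ≫ B) + vW ≫ k3 ∧
      k3 ≫ vW = 0 := by
  have huY := eq_neg_comp_inv_of_lift_comp_eq_zero A B C D hd21
  have hvZ := eq_neg_inv_comp_of_comp_desc_eq_zero A B C D hd32
  refine ⟨biprod.fst, biprod.desc (-(inv D ≫ B)) (𝟙 W), biprod.lift (𝟙 X) (-(C ≫ inv D)),
    biprod.inr, 0, biprod.fst ≫ inv D ≫ biprod.inr, 0, 0, 0, 0, biprod.lift_fst _ _,
    desc_lift_comp_desc_neg_inv_comp A B C D, ?_, ?_, sub_comp_inr_eq_lift_neg_comp_inv_comp A B C D,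
    (biprod.inr_desc _ _).symm, comp_zero, ?_, ?_, zero_comp, comp_zero, ?_, ?_, zero_comp⟩
  · ext <;> simp [hvZ]
  · ext <;> simp [huY]
  · simpa using id_sub_fst_comp_lift_neg_comp_inv_eq A B C D
  · simpa using id_sub_desc_neg_inv_comp_comp_inr_eq A B C D
  · simp
  · simp
end
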